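/- arXiv:2303.04775 — 3 statements merged into one kernel-verified Lean document; each statement's English description precedes it below -/
import Mathlib

section
/- Let k > 0, φ > 0, ν ∈ (0,1). The function h(x) = φ x^(ν+1) / (k Γ(ν+3)) satisfies h(0)=0 and, for all x > 0, k · d/dx ( h(x) · (d^ν h/dx^ν)(x) ) = φ h(x), where d^ν/dx^ν is the Caputo derivative of order ν. -/
/-!
The Caputo derivative of a power is again a power: after substituting `f' = β s^(β-1)` the
defining integral is a Beta integral, giving `Γ(β+1)/Γ(β+1-ν) x^(β-ν)`. With `h = C x^(ν+1)`
this makes `d^ν h/dx^ν = C Γ(ν+2) x`, so `h · d^ν h/dx^ν = C² Γ(ν+2) x^(ν+2)`, whose derivative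
is `C² Γ(ν+3) x^(ν+1) = (φ / k) h`.
-/

/-- Caputo fractional derivative of order `ν` with zero starting point. -/
noncomputable def caputo (ν : ℝ) (f : ℝ → ℝ) (z : ℝ) : ℝ :=
  (Real.Gamma (1 - ν))⁻¹ * ∫ s in (0:ℝ)..z, (z - s) ^ (-ν) * deriv f s

open Real intervalIntegral Filter Topology

theorem integral_rpow_mul_sub_rpow {a b x : ℝ} (ha : 0 < a) (hb : 0 < b) (hx : 0 < x) :
    ∫ s in (0:ℝ)..x, s ^ (a - 1) * (x - s) ^ (b - 1)
      = Gamma a * Gamma b / Gamma (a + b) * x ^ (a + b - 1) := by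
  have hbeta : Complex.betaIntegral a b = ((Gamma a * Gamma b / Gamma (a + b) : ℝ) : ℂ) := by
    have hΓ : Complex.Gamma (a + b) ≠ 0 := by
      rw [← Complex.ofReal_add, Complex.Gamma_ofReal]
      exact_mod_cast (Gamma_pos_of_pos (add_pos ha hb)).ne'
    push_cast [← Complex.Gamma_ofReal]
    rw [eq_div_iff hΓ, mul_comm, ← Complex.Gamma_mul_Gamma_eq_betaIntegral (by simpa) (by simpa)]
  have hcast : ∫ s in (0:ℝ)..x, ((s ^ (a - 1) * (x - s) ^ (b - 1) : ℝ) : ℂ)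
      = ((Gamma a * Gamma b / Gamma (a + b) * x ^ (a + b - 1) : ℝ) : ℂ) := by
    rw [Complex.ofReal_mul, Complex.ofReal_cpow hx.le, mul_comm, ← hbeta, Complex.ofReal_sub, Complex.ofReal_add, Complex.ofReal_one,
      ← Complex.betaIntegral_scaled _ _ hx]
    refine integral_congr fun s hs => ?_
    rw [Set.uIcc_of_le hx.le] at hs
    push_cast
    rw [Complex.ofReal_cpow hs.1, Complex.ofReal_cpow (sub_nonneg.2 hs.2)]
    push_cast
    rfl
  exact_mod_cast integral_ofReal.symm.trans hcast

theorem caputo_const_mul (ν c : ℝ) (f : ℝ → ℝ) (z : ℝ) :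
    caputo ν (fun y => c * f y) z = c * caputo ν f z := by
  simp only [caputo, deriv_const_mul_field', mul_left_comm _ c, integral_const_mul]

theorem caputo_rpow {ν β x : ℝ} (hν : ν < 1) (hβ : 0 < β) (hx : 0 < x) :
    caputo ν (fun y => y ^ β) x = Gamma (β + 1) / Gamma (β + 1 - ν) * x ^ (β - ν) := by
  have hint : ∫ s in (0:ℝ)..x, (x - s) ^ (-ν) * deriv (fun y => y ^ β) s
      = β * (Gamma β * Gamma (1 - ν) / Gamma (β + 1 - ν) * x ^ (β - ν)) := by
    simp only [Real.deriv_rpow_const]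
    have hbeta := integral_rpow_mul_sub_rpow hβ (sub_pos.2 hν) hx
    rw [show β + (1 - ν) = β + 1 - ν by ring, show β + 1 - ν - 1 = β - ν by ring,
      sub_sub_cancel_left] at hbeta
    rw [← hbeta, ← integral_const_mul]
    congr 1 with s
    ring
  have hΓ : Gamma (1 - ν) ≠ 0 := (Gamma_pos_of_pos (sub_pos.2 hν)).ne'
  rw [caputo, hint, Gamma_add_one hβ.ne']
  field_simp

theorem steady_fractional_solution_general (k φ ν : ℝ) (hk : 0 < k)
    (hν : ν ∈ Set.Ioo (0:ℝ) 1)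
    (h : ℝ → ℝ) (hdef : h = fun x => φ * x ^ (ν + 1) / (k * Real.Gamma (ν + 3))) :
    h 0 = 0 ∧ ∀ x > 0, k * deriv (fun x => h x * caputo ν h x) x = φ * h x := by
  obtain ⟨hν0, hν1⟩ := hν
  set C := φ / (k * Gamma (ν + 3)) with hC
  have hh : h = fun x => C * x ^ (ν + 1) := by
    rw [hdef]; funext x; ring
  have hcaputo : ∀ y > 0, caputo ν h y = C * Gamma (ν + 2) * y := by
    intro y hy
    rw [hh, caputo_const_mul, caputo_rpow hν1 (by linarith) hy, show ν + 1 + 1 - ν = 2 by ring,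
      add_sub_cancel_left, Gamma_two, rpow_one, add_assoc, one_add_one_eq_two]
    ring
  refine ⟨by simp [hh, zero_rpow (by linarith : ν + 1 ≠ 0)], fun x hx => ?_⟩
  have hprod :
      (fun y => h y * caputo ν h y) =ᶠ[𝓝 x] fun y => C ^ 2 * Gamma (ν + 2) * y ^ (ν + 2) := by
    filter_upwards [Ioi_mem_nhds hx] with y hy
    rw [hcaputo y hy, hh, show ν + 2 = ν + 1 + 1 by ring, rpow_add_one (ne_of_gt hy)]
    ring
  have hΓ : Gamma (ν + 3) = (ν + 2) * Gamma (ν + 2) := by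
    rw [show ν + 3 = ν + 2 + 1 by ring, Gamma_add_one (by linarith)]
  rw [hprod.deriv_eq, deriv_const_mul_field, Real.deriv_rpow_const, hh, hC, hΓ,
    show ν + 2 - 1 = ν + 1 by ring]
  field_simp

theorem steady_fractional_solution (k φ ν : ℝ) (hk : 0 < k) (hφ : 0 < φ)
    (hν : ν ∈ Set.Ioo (0:ℝ) 1)
    (h : ℝ → ℝ) (hdef : h = fun x => φ * x ^ (ν + 1) / (k * Real.Gamma (ν + 3))) :
    h 0 = 0 ∧ ∀ x > 0, k * deriv (fun x => h x * caputo ν h x) x = φ * h x :=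
  steady_fractional_solution_general k φ ν hk hν h hdef
end

section
/- Let k > 0, φ ≥ 6k. The function h(x,t) = φ x² / ( e^(φ t)(φ − 6k) + 6k ) satisfies h(x,0) = x², h(0,t) = 0, and ∂h/∂t = k ∂/∂x ( h ∂h/∂x ) − φ h for all x > 0, t > 0. -/
/-!
The solution separates as `h x t = x ^ 2 * g t` with `g t = φ / (exp (φ t) (φ - 6k) + 6k)`.
For such a profile `k ∂ₓ(h ∂ₓh) = 6 k x² g²`, so the equation reduces to the logistic ODE
`g' = 6k g² - φ g`, which `g` solves because its denominator `D` satisfies `D' = φ (D - 6k)`.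
-/

open Real

theorem hasDerivAt_div_exp_mul_add (φ a b t : ℝ) (hD : exp (φ * t) * a + b ≠ 0) :
    HasDerivAt (fun τ => φ / (exp (φ * τ) * a + b))
      (b * (φ / (exp (φ * t) * a + b)) ^ 2 - φ * (φ / (exp (φ * t) * a + b))) t := by
  have hden : HasDerivAt (fun τ => exp (φ * τ) * a + b) (exp (φ * t) * φ * a) t := by
    simpa using ((((hasDerivAt_id t).const_mul φ).exp).mul_const a).add_const b
  refine ((hasDerivAt_const t φ).div hden hD).congr_deriv ?_
  field_simp
  ring

theorem deriv_sq_mul_const_mul_deriv (c x : ℝ) :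
    deriv (fun ξ => ξ ^ 2 * c * deriv (fun ξ' => ξ' ^ 2 * c) ξ) x = 6 * c ^ 2 * x ^ 2 := by
  have hflux : (fun ξ => ξ ^ 2 * c * deriv (fun ξ' => ξ' ^ 2 * c) ξ)
      = fun ξ => 2 * c ^ 2 * ξ ^ 3 := by
    funext ξ
    rw [deriv_mul_const_field, deriv_pow_field]
    ring
  rw [hflux, deriv_const_mul_field, deriv_pow_field]
  ring

theorem unsteady_local_solution (k φ : ℝ) (hk : 0 < k) (hφ : 6 * k ≤ φ)
    (h : ℝ → ℝ → ℝ)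
    (hdef : h = fun x t => φ * x ^ 2 / (Real.exp (φ * t) * (φ - 6 * k) + 6 * k)) :
    (∀ x, h x 0 = x ^ 2) ∧ (∀ t, h 0 t = 0) ∧
      ∀ x > (0:ℝ), ∀ t > (0:ℝ),
        deriv (fun τ => h x τ) t
          = k * deriv (fun ξ => h ξ t * deriv (fun ξ' => h ξ' t) ξ) x - φ * h x t := by
  have hD : ∀ t, exp (φ * t) * (φ - 6 * k) + 6 * k ≠ 0 := fun t => by
    have : 0 ≤ exp (φ * t) * (φ - 6 * k) := mul_nonneg (exp_pos _).le (by linarith)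
    linarith
  have hsep : h = fun x t => x ^ 2 * (φ / (exp (φ * t) * (φ - 6 * k) + 6 * k)) := by
    rw [hdef]
    funext x t
    ring
  subst hsep
  refine ⟨fun x => ?_, fun t => by simp, fun x _ t _ => ?_⟩
  · have hφ0 : φ ≠ 0 := by linarith
    simp [hφ0]
  · rw [((hasDerivAt_div_exp_mul_add φ _ _ t (hD t)).const_mul (x ^ 2)).deriv,
      deriv_sq_mul_const_mul_deriv]
    ring
end

section
/- Let k > 0. The function h(x,t) = x² / (1 − 6kt) satisfies h(x,0) = x², h(0,t)=0, and ∂h/∂t = k ∂/∂x(h ∂h/∂x) for all x > 0 and 0 ≤ t < 1/(6k). -/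
/-! The datum `x²` evolves by separation of variables, `h = x² a(t)`: the Boussinesq equation
reduces to `a' = 6 k a²`, whose solution with `a(0) = 1` is `a(t) = 1 / (1 - 6 k t)`, finite
until the blow-up time `1 / (6 k)`. -/

open Set

lemma hasDerivAt_const_div_one_sub_mul (A c t : ℝ) (ht : 1 - c * t ≠ 0) :
    HasDerivAt (fun τ => A / (1 - c * τ)) (A * c / (1 - c * t) ^ 2) t := by
  have hden : HasDerivAt (fun τ => 1 - c * τ) (-c) t := by
    simpa using ((hasDerivAt_id t).const_mul c).const_sub 1
  exact ((hasDerivAt_const t A).fun_div hden ht).congr_deriv (by ring)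

-- Also valid at `c = 0`, where `x / 0 = 0` makes both sides vanish.
lemma deriv_sq_div (c x : ℝ) : deriv (fun ξ => ξ ^ 2 / c) x = 2 * x / c := by
  simp [div_eq_mul_inv, mul_comm]

lemma deriv_sq_div_mul_deriv_sq_div (c x : ℝ) :
    deriv (fun ξ => ξ ^ 2 / c * deriv (fun ξ' => ξ' ^ 2 / c) ξ) x = 6 * x ^ 2 / c ^ 2 := by
  have hflux : (fun ξ => ξ ^ 2 / c * deriv (fun ξ' => ξ' ^ 2 / c) ξ)
      = fun ξ => 2 / c ^ 2 * ξ ^ 3 := by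
    funext ξ
    rw [deriv_sq_div]
    ring
  rw [hflux, deriv_const_mul _ (differentiableAt_pow 3), deriv_pow_field]
  ring

lemma one_sub_mul_pos_of_mem_Ico {a t : ℝ} (ht : t ∈ Ico 0 (1 / a)) : 0 < 1 - a * t := by
  have ha : 0 < a := one_div_pos.mp (ht.1.trans_lt ht.2)
  have : t * a < 1 := (lt_div_iff₀ ha).mp ht.2
  linarith

theorem unsteady_local_solution_no_sink_general (k : ℝ)
    (h : ℝ → ℝ → ℝ) (hdef : h = fun x t => x ^ 2 / (1 - 6 * k * t)) :
    (∀ x, h x 0 = x ^ 2) ∧ (∀ t, h 0 t = 0) ∧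
      ∀ x > (0:ℝ), ∀ t ∈ Set.Ico (0:ℝ) (1 / (6 * k)),
        deriv (fun τ => h x τ) t
          = k * deriv (fun ξ => h ξ t * deriv (fun ξ' => h ξ' t) ξ) x := by
  subst hdef
  refine ⟨fun x => by simp, fun t => by simp, fun x _ t ht => ?_⟩
  have hden : 1 - 6 * k * t ≠ 0 := (one_sub_mul_pos_of_mem_Ico ht).ne'
  rw [(hasDerivAt_const_div_one_sub_mul (x ^ 2) (6 * k) t hden).deriv,
    deriv_sq_div_mul_deriv_sq_div]
  ring

theorem unsteady_local_solution_no_sink (k : ℝ) (hk : 0 < k)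
    (h : ℝ → ℝ → ℝ) (hdef : h = fun x t => x ^ 2 / (1 - 6 * k * t)) :
    (∀ x, h x 0 = x ^ 2) ∧ (∀ t, h 0 t = 0) ∧
      ∀ x > (0:ℝ), ∀ t ∈ Set.Ico (0:ℝ) (1 / (6 * k)),
        deriv (fun τ => h x τ) t
          = k * deriv (fun ξ => h ξ t * deriv (fun ξ' => h ξ' t) ξ) x :=
  unsteady_local_solution_no_sink_general k h hdef
end
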